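/- Let (𝔫₁, ⟨·,·⟩₁) and (𝔫₂, ⟨·,·⟩₂) be metric Lie algebras and let (𝔫, ⟨·,·⟩) be their orthogonal direct sum, with π₂ : 𝔫 → 𝔫₂ the projection. Then: (i) if D is a skew-symmetric derivation of (𝔫, ⟨·,·⟩), the map X ↦ π₂(D(X)) for X ∈ 𝔫₂ is a skew-symmetric derivation of (𝔫₂, ⟨·,·⟩₂); (ii) if A is a linear map assigning to each T ∈ 𝔫 a skew-symmetric derivation A(T) of (𝔫, ⟨·,·⟩) with ⟨[T,T'] + A(T)(T'), T⟩ = 0 for all T, T' ∈ 𝔫, then the linear map Ā(T₂) := π₂ ∘ A(T₂)|_{𝔫₂} assigns to each T₂ ∈ 𝔫₂ a skew-symmetric derivation of (𝔫₂, ⟨·,·⟩₂) and satisfies ⟨[T₂,T₂'] + Ā(T₂)(T₂'), T₂⟩₂ = 0 for all T₂, T₂' ∈ 𝔫₂ (i.e. a linear geodesic graph on the sum induces a linear geodesic graph on the factor 𝔫₂). -/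
import Mathlib


/-- `D` is a skew-symmetric derivation with respect to a given bracket `bk` and bilinear
pairing `Φ` on a real vector space. -/
def IsSkewDerivGen {V : Type*} [AddCommGroup V] [Module ℝ V]
    (bk : V → V → V) (Φ : V → V → ℝ) (D : V →ₗ[ℝ] V) : Prop :=
  (∀ X Y : V, D (bk X Y) = bk (D X) Y + bk X (D Y)) ∧
  (∀ X Y : V, Φ (D X) Y + Φ X (D Y) = 0)

/-- The componentwise bracket of the orthogonal direct sum `𝔫₁ × 𝔫₂` (so `[𝔫₁, 𝔫₂] = 0`). -/
def bkProd {n₁ n₂ : Type*} [LieRing n₁] [LieRing n₂] (x y : n₁ × n₂) : n₁ × n₂ :=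
  (⁅x.1, y.1⁆, ⁅x.2, y.2⁆)

/-- The inner product of the orthogonal direct sum `𝔫₁ × 𝔫₂`. -/
def formProd {n₁ n₂ : Type*} [AddCommGroup n₁] [Module ℝ n₁] [AddCommGroup n₂] [Module ℝ n₂]
    (B₁ : LinearMap.BilinForm ℝ n₁) (B₂ : LinearMap.BilinForm ℝ n₂) (x y : n₁ × n₂) : ℝ :=
  B₁ x.1 y.1 + B₂ x.2 y.2

/-- (i) a skew-symmetric derivation of an orthogonal direct sum of metric Lie
algebras projects to a skew-symmetric derivation of the second factor; (ii) a linear geodesic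
graph on the sum induces a linear geodesic graph on the second factor. -/
theorem stmt19 {n₁ n₂ : Type*} [LieRing n₁] [LieAlgebra ℝ n₁] [FiniteDimensional ℝ n₁]
    [LieRing n₂] [LieAlgebra ℝ n₂] [FiniteDimensional ℝ n₂]
    (B₁ : LinearMap.BilinForm ℝ n₁) (B₂ : LinearMap.BilinForm ℝ n₂)
    (hsymm₁ : ∀ x y : n₁, B₁ x y = B₁ y x)
    (hnondeg₁ : ∀ x : n₁, (∀ y : n₁, B₁ x y = 0) → x = 0)
    (hsymm₂ : ∀ x y : n₂, B₂ x y = B₂ y x)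
    (hnondeg₂ : ∀ x : n₂, (∀ y : n₂, B₂ x y = 0) → x = 0) :
    -- (i)
    (∀ D : (n₁ × n₂) →ₗ[ℝ] (n₁ × n₂),
      IsSkewDerivGen bkProd (formProd B₁ B₂) D →
      IsSkewDerivGen (fun x y : n₂ => ⁅x, y⁆) (fun x y : n₂ => B₂ x y)
        (LinearMap.snd ℝ n₁ n₂ ∘ₗ D ∘ₗ LinearMap.inr ℝ n₁ n₂)) ∧
    -- (ii)
    (∀ A : (n₁ × n₂) →ₗ[ℝ] ((n₁ × n₂) →ₗ[ℝ] (n₁ × n₂)),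
      (∀ T : n₁ × n₂, IsSkewDerivGen bkProd (formProd B₁ B₂) (A T)) →
      (∀ T T' : n₁ × n₂, formProd B₁ B₂ (bkProd T T' + A T T') T = 0) →
      ∀ T₂ : n₂,
        IsSkewDerivGen (fun x y : n₂ => ⁅x, y⁆) (fun x y : n₂ => B₂ x y)
          (LinearMap.snd ℝ n₁ n₂ ∘ₗ A (0, T₂) ∘ₗ LinearMap.inr ℝ n₁ n₂) ∧
        ∀ T₂' : n₂,
          B₂ (⁅T₂, T₂'⁆ + (LinearMap.snd ℝ n₁ n₂ ∘ₗ A (0, T₂) ∘ₗ LinearMap.inr ℝ n₁ n₂) T₂')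
            T₂ = 0) := by
  have key : ∀ D : (n₁ × n₂) →ₗ[ℝ] (n₁ × n₂),
      IsSkewDerivGen bkProd (formProd B₁ B₂) D →
      IsSkewDerivGen (fun x y : n₂ => ⁅x, y⁆) (fun x y : n₂ => B₂ x y)
        (LinearMap.snd ℝ n₁ n₂ ∘ₗ D ∘ₗ LinearMap.inr ℝ n₁ n₂) := by
    intro D ⟨hder, hskew⟩
    constructor
    · intro X Y
      have h := hder (0, X) (0, Y)
      have h0 : bkProd ((0 : n₁), X) (0, Y) = ((0 : n₁), ⁅X, Y⁆) := by
        simp [bkProd]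
      rw [h0] at h
      have := congrArg Prod.snd h
      simpa [bkProd] using this
    · intro X Y
      have h := hskew (0, X) (0, Y)
      simpa [formProd] using h
  refine ⟨key, ?_⟩
  intro A hA hgeo T₂
  refine ⟨key _ (hA _), ?_⟩
  intro T₂'
  have h := hgeo (0, T₂) (0, T₂')
  have h0 : bkProd ((0 : n₁), T₂) (0, T₂') = ((0 : n₁), ⁅T₂, T₂'⁆) := by
    simp [bkProd]
  rw [h0] at h
  simpa [formProd] using h
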